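/- Let G be a graph and let P be an independent set partition of G containing a part {u₁,u₂,u₃} of size 3 and a part {v} of size 1 with u₁v not an edge of G. Then there exist three pairwise-adjacent neighbours Q₁, Q₂, Q₃ of P in B(G) that have a common neighbour R outside the closed neighbourhood N[P], together with a further neighbour Q' of P that is adjacent to exactly one of Q₁, Q₂, Q₃. -/

import Mathlib

open Finset

variable {V : Type*} [Fintype V] [DecidableEq V]

def IsISP (G : SimpleGraph V) (P : Finpartition (univ : Finset V)) : Prop :=
  ∀ A ∈ P.parts, ∀ u ∈ A, ∀ v ∈ A, ¬ G.Adj u v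

def samePart (P : Finpartition (univ : Finset V)) (u v : V) : Prop :=
  ∃ A ∈ P.parts, u ∈ A ∧ v ∈ A

def MovedBy (P Q : Finpartition (univ : Finset V)) (x : V) : Prop :=
  P ≠ Q ∧ ∀ u v : V, u ≠ x → v ≠ x → (samePart P u v ↔ samePart Q u v)

def BellGraph (G : SimpleGraph V) :
    SimpleGraph {P : Finpartition (univ : Finset V) // IsISP G P} where
  Adj P Q := ∃ x, MovedBy P.1 Q.1 x
  symm := by
    constructor
    rintro P Q ⟨x, hne, h⟩
    exact ⟨x, Ne.symm hne, fun u v hu hv => (h u v hu hv).symm⟩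
  loopless := by
    constructor
    rintro P ⟨x, hne, _⟩
    exact hne rfl

def UpperBell (G : SimpleGraph V) (k : ℕ) :
    SimpleGraph {P : Finpartition (univ : Finset V) // IsISP G P ∧ k ≤ P.parts.card} where
  Adj P Q := ∃ x, MovedBy P.1 Q.1 x
  symm := by
    constructor
    rintro P Q ⟨x, hne, h⟩
    exact ⟨x, Ne.symm hne, fun u v hu hv => (h u v hu hv).symm⟩
  loopless := by
    constructor
    rintro P ⟨x, hne, _⟩
    exact hne rfl

def IsUniversal (G : SimpleGraph V) (v : V) : Prop :=
  ∀ w, w ≠ v → G.Adj v w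

/-!
Two partitions are adjacent in `B(G)` when they differ but induce the same partition of
`V ∖ {x}` for some `x`. Let `Qᵢ` split `uᵢ` off `P` as a singleton, `R` split off all three, and
`Q'` move `u₁` into the part `{v}` (still independent, as `u₁v` is not an edge). Deleting one
`uₖ` leaves two elements of `{u₁, u₂, u₃}`, and these are separated in every one of `Q₁, Q₂, Q₃, R`
that isolates either of them: this gives the triangle and its common neighbour `R`. `P` and `R`
differ on all three pairs `uᵢuⱼ`, which no single vertex meets. Off `v`, `Q'` agrees with `Q₁`,
but it differs from `Q₂` and `Q₃` on the disjoint pairs `u₁v` and `u₂u₃`.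
-/

namespace Finpartition

def ker {α : Type*} [DecidableEq α] (f : V → α) : Finpartition (univ : Finset V) :=
  ofSetoid (Setoid.ker f)

def isolate (P : Finpartition (univ : Finset V)) (S : Finset V) : Finpartition (univ : Finset V) :=
  ker fun a => if a ∈ S then Sum.inl a else Sum.inr (P.part a)

def moveTo (P : Finpartition (univ : Finset V)) (x y : V) : Finpartition (univ : Finset V) :=
  ker fun a => P.part (if a = x then y else a)

end Finpartition

open Finpartition

section SamePart

variable {P : Finpartition (univ : Finset V)} {A : Finset V} {a b v w x y : V}

lemma samePart_iff_mem_part : samePart P a b ↔ a ∈ P.part b :=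
  P.mem_part_iff_exists.symm

lemma samePart_iff_part_eq : samePart P a b ↔ P.part a = P.part b := by
  rw [samePart_iff_mem_part, P.mem_part_iff_part_eq_part (mem_univ a) (mem_univ b)]

lemma samePart_refl (P : Finpartition (univ : Finset V)) (a : V) : samePart P a a :=
  samePart_iff_part_eq.2 rfl

lemma samePart_comm : samePart P a b ↔ samePart P b a := by
  simp only [samePart_iff_part_eq, eq_comm]

lemma mem_of_samePart_of_mem (hA : A ∈ P.parts) (hab : samePart P a b) (ha : a ∈ A) :
    b ∈ A := by
  obtain ⟨B, hB, haB, hbB⟩ := hab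
  exact P.eq_of_mem_parts hB hA haB ha ▸ hbB

lemma samePart_of_mem (hA : A ∈ P.parts) (ha : a ∈ A) (hb : b ∈ A) : samePart P a b :=
  ⟨A, hA, ha, hb⟩

lemma mem_iff_mem_of_samePart (hA : A ∈ P.parts) (hab : samePart P a b) : a ∈ A ↔ b ∈ A :=
  ⟨mem_of_samePart_of_mem hA hab, mem_of_samePart_of_mem hA (samePart_comm.1 hab)⟩

lemma samePart_singleton (hv : {v} ∈ P.parts) : samePart P v w ↔ w = v :=
  ⟨fun h => mem_singleton.1 (mem_of_samePart_of_mem hv h (mem_singleton_self v)),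
    fun h => h ▸ samePart_refl P v⟩

lemma samePart_ker {α : Type*} [DecidableEq α] (f : V → α) :
    samePart (ker f) a b ↔ f a = f b := by
  rw [samePart_iff_mem_part, ker, mem_part_ofSetoid_iff_rel, Setoid.ker_def, eq_comm]

lemma samePart_isolate (S : Finset V) :
    samePart (P.isolate S) a b ↔ samePart P a b ∧ (a ∈ S ∨ b ∈ S → a = b) := by
  rw [isolate, samePart_ker, samePart_iff_part_eq]
  split_ifs <;> grind

lemma samePart_moveTo :
    samePart (P.moveTo x y) a b ↔
      samePart P (if a = x then y else a) (if b = x then y else b) := by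
  rw [moveTo, samePart_ker, samePart_iff_part_eq]

end SamePart

section Independent

variable {G : SimpleGraph V} {P Q : Finpartition (univ : Finset V)} {x y : V}

lemma isISP_iff : IsISP G P ↔ ∀ a b, samePart P a b → ¬ G.Adj a b :=
  ⟨fun h a b ⟨A, hA, ha, hb⟩ => h A hA a ha b hb,
    fun h A hA a ha b hb => h a b ⟨A, hA, ha, hb⟩⟩

lemma IsISP.of_samePart_imp (hP : IsISP G P) (h : ∀ a b, samePart Q a b → samePart P a b) :
    IsISP G Q :=
  isISP_iff.2 fun a b hab => isISP_iff.1 hP a b (h a b hab)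

lemma IsISP.isolate (hP : IsISP G P) (S : Finset V) : IsISP G (P.isolate S) :=
  hP.of_samePart_imp fun _ _ hab => (samePart_isolate S).1 hab |>.1

lemma IsISP.moveTo (hP : IsISP G P) (hy : ∀ w, samePart P y w → ¬ G.Adj x w) :
    IsISP G (P.moveTo x y) := by
  refine isISP_iff.2 fun a b hab => ?_
  rw [samePart_moveTo] at hab
  split_ifs at hab with ha hb hb
  · exact ha ▸ hb ▸ G.loopless.irrefl x
  · exact ha ▸ hy b hab
  · exact hb ▸ fun h => hy a (samePart_comm.1 hab) h.symm
  · exact isISP_iff.1 hP a b hab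

end Independent

section MovedBy

variable {P Q : Finpartition (univ : Finset V)} {a b c d x y z : V}

lemma ne_of_not_samePart_iff (hab : ¬ (samePart P a b ↔ samePart Q a b)) : a ≠ b := by
  rintro rfl
  exact hab (iff_of_true (samePart_refl P a) (samePart_refl Q a))

lemma movedBy_of_samePart (hab : ¬ (samePart P a b ↔ samePart Q a b))
    (h : ∀ p q, p ≠ x → q ≠ x → (samePart P p q ↔ samePart Q p q)) : MovedBy P Q x :=
  ⟨fun hPQ => hab (hPQ ▸ Iff.rfl), h⟩

lemma not_movedBy_of_disjoint_pairs (hab : ¬ (samePart P a b ↔ samePart Q a b))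
    (hcd : ¬ (samePart P c d ↔ samePart Q c d)) (hac : a ≠ c) (had : a ≠ d) (hbc : b ≠ c)
    (hbd : b ≠ d) : ¬ MovedBy P Q x := by
  rintro ⟨-, h⟩
  by_cases hx : x = a ∨ x = b
  · exact hcd (h c d (by grind) (by grind))
  · exact hab (h a b (by grind) (by grind))

lemma not_movedBy_of_triangle (hab : ¬ (samePart P a b ↔ samePart Q a b))
    (hac : ¬ (samePart P a c ↔ samePart Q a c)) (hbc : ¬ (samePart P b c ↔ samePart Q b c)) :
    ¬ MovedBy P Q x := by
  have := ne_of_not_samePart_iff hab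
  have := ne_of_not_samePart_iff hac
  have := ne_of_not_samePart_iff hbc
  rintro ⟨-, h⟩
  by_cases hxa : x = a
  · exact hbc (h b c (by grind) (by grind))
  by_cases hxb : x = b
  · exact hac (h a c (Ne.symm hxa) (by grind))
  · exact hab (h a b (Ne.symm hxa) (Ne.symm hxb))

lemma movedBy_isolate_singleton (hxy : x ≠ y) (h : samePart P x y) :
    MovedBy P (P.isolate {x}) x :=
  movedBy_of_samePart (a := x) (b := y) (by simp [samePart_isolate, h, hxy]) fun p q hp hq => by
    simp [samePart_isolate, hp, hq]

lemma movedBy_moveTo (h : ¬ samePart P x y) : MovedBy P (P.moveTo x y) x :=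
  movedBy_of_samePart (a := x) (b := y) (by simp [samePart_moveTo, h, samePart_refl])
    fun p q hp hq => by simp [samePart_moveTo, hp, hq]

lemma movedBy_moveTo_isolate (hxy : x ≠ y) (hy : {y} ∈ P.parts) :
    MovedBy (P.moveTo x y) (P.isolate {x}) y := by
  refine movedBy_of_samePart (a := x) (b := y) (by simp [samePart_moveTo, samePart_isolate,
    samePart_refl, hxy]) fun p q hp hq => ?_
  rw [samePart_moveTo, samePart_isolate, mem_singleton, mem_singleton]
  have := (samePart_singleton hy (w := p)).1
  have := (samePart_singleton hy (w := q)).1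
  split_ifs <;> grind [samePart_refl, samePart_comm]

lemma not_movedBy_moveTo_isolate (hxy : ¬ samePart P x y) (hbc : samePart P b c) (hb : b ≠ c)
    (hxb : x ≠ b) (hxc : x ≠ c) (hyb : y ≠ b) (hyc : y ≠ c) :
    ¬ MovedBy (P.moveTo x y) (P.isolate {b}) z := by
  refine not_movedBy_of_disjoint_pairs (a := x) (b := y) (c := b) (d := c) ?_ ?_ hxb hxc hyb hyc
  · simp [samePart_moveTo, samePart_isolate, samePart_refl, hxy]
  · simp [samePart_moveTo, samePart_isolate, hbc, hb, hxb.symm, hxc.symm]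

lemma movedBy_isolate_isolate (hA : {a, b, c} ∈ P.parts) (hab : a ≠ b) (hac : a ≠ c)
    (hbc : b ≠ c) :
    MovedBy (P.isolate {a}) (P.isolate {b}) c := by
  have hsame : samePart P a c := samePart_of_mem hA (by simp) (by simp)
  refine movedBy_of_samePart (a := a) (b := c) (by simp [samePart_isolate, hsame, hac, hab,
    hbc.symm]) fun p q hp hq => ?_
  rw [samePart_isolate, samePart_isolate]
  refine and_congr_right fun hpq => ?_
  have := mem_iff_mem_of_samePart hA hpq
  simp only [mem_insert, mem_singleton] at this ⊢
  grind

lemma movedBy_isolate_isolate_triple (hA : {a, b, c} ∈ P.parts) (hab : a ≠ b) (hac : a ≠ c)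
    (hbc : b ≠ c) :
    MovedBy (P.isolate {a}) (P.isolate {a, b, c}) b := by
  have hsame : samePart P b c := samePart_of_mem hA (by simp) (by simp)
  refine movedBy_of_samePart (a := b) (b := c) (by simp [samePart_isolate, hsame, hab.symm,
    hac.symm, hbc]) fun p q hp hq => ?_
  rw [samePart_isolate, samePart_isolate]
  refine and_congr_right fun hpq => ?_
  have := mem_iff_mem_of_samePart hA hpq
  simp only [mem_insert, mem_singleton] at this ⊢
  grind

lemma isolate_triple_ne (hA : {a, b, c} ∈ P.parts) (hab : a ≠ b) :
    P.isolate {a, b, c} ≠ P := by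
  intro h
  have hsame : samePart P a b := samePart_of_mem hA (by simp) (by simp)
  rw [← h, samePart_isolate] at hsame
  exact hab (hsame.2 (by simp))

lemma not_movedBy_isolate_triple (hA : {a, b, c} ∈ P.parts) (hab : a ≠ b) (hac : a ≠ c)
    (hbc : b ≠ c) :
    ¬ MovedBy P (P.isolate {a, b, c}) x := by
  have hsame : ∀ p q, p ∈ ({a, b, c} : Finset V) → q ∈ ({a, b, c} : Finset V) →
      samePart P p q := fun _ _ => samePart_of_mem hA
  refine not_movedBy_of_triangle (a := a) (b := b) (c := c) ?_ ?_ ?_ <;>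
    simp [samePart_isolate, hsame, hab, hac, hbc]

end MovedBy

theorem stmt11 (G : SimpleGraph V)
    (P : {P : Finpartition (univ : Finset V) // IsISP G P})
    (u₁ u₂ u₃ v : V) (h12 : u₁ ≠ u₂) (h13 : u₁ ≠ u₃) (h23 : u₂ ≠ u₃)
    (h1 : ({u₁, u₂, u₃} : Finset V) ∈ P.1.parts) (h2 : ({v} : Finset V) ∈ P.1.parts)
    (e1 : ¬ G.Adj u₁ v) :
    ∃ Q₁ Q₂ Q₃, (BellGraph G).Adj P Q₁ ∧ (BellGraph G).Adj P Q₂ ∧ (BellGraph G).Adj P Q₃ ∧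
      (BellGraph G).Adj Q₁ Q₂ ∧ (BellGraph G).Adj Q₁ Q₃ ∧ (BellGraph G).Adj Q₂ Q₃ ∧
      (∃ R, (BellGraph G).Adj Q₁ R ∧ (BellGraph G).Adj Q₂ R ∧ (BellGraph G).Adj Q₃ R ∧
        R ≠ P ∧ ¬ (BellGraph G).Adj P R) ∧
      ∃ Q', (BellGraph G).Adj P Q' ∧
        (((BellGraph G).Adj Q' Q₁ ∧ ¬ (BellGraph G).Adj Q' Q₂ ∧ ¬ (BellGraph G).Adj Q' Q₃) ∨
         (¬ (BellGraph G).Adj Q' Q₁ ∧ (BellGraph G).Adj Q' Q₂ ∧ ¬ (BellGraph G).Adj Q' Q₃) ∨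
         (¬ (BellGraph G).Adj Q' Q₁ ∧ ¬ (BellGraph G).Adj Q' Q₂ ∧ (BellGraph G).Adj Q' Q₃)) := by
  obtain ⟨P, hP⟩ := P
  have h132 : ({u₁, u₃, u₂} : Finset V) ∈ P.parts := by rwa [pair_comm]
  have h213 : ({u₂, u₁, u₃} : Finset V) ∈ P.parts := by rwa [insert_comm]
  have h231 : ({u₂, u₃, u₁} : Finset V) ∈ P.parts := by rwa [pair_comm, insert_comm]
  have h312 : ({u₃, u₁, u₂} : Finset V) ∈ P.parts := by
    rwa [insert_comm u₃ u₁, pair_comm u₃ u₂]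
  have s12 : samePart P u₁ u₂ := samePart_of_mem h1 (by simp) (by simp)
  have s13 : samePart P u₁ u₃ := samePart_of_mem h1 (by simp) (by simp)
  have s23 : samePart P u₂ u₃ := samePart_of_mem h1 (by simp) (by simp)
  have n1v : ¬ samePart P u₁ v := fun h => by
    obtain rfl := (samePart_singleton h2).1 (samePart_comm.1 h)
    exact h12 ((samePart_singleton h2).1 s12).symm
  have hv2 : v ≠ u₂ := fun h => n1v (h ▸ s12)
  have hv3 : v ≠ u₃ := fun h => n1v (h ▸ s13)
  refine ⟨⟨_, hP.isolate {u₁}⟩, ⟨_, hP.isolate {u₂}⟩, ⟨_, hP.isolate {u₃}⟩,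
    ⟨u₁, movedBy_isolate_singleton h12 s12⟩,
    ⟨u₂, movedBy_isolate_singleton h12.symm (samePart_comm.1 s12)⟩,
    ⟨u₃, movedBy_isolate_singleton h13.symm (samePart_comm.1 s13)⟩,
    ⟨u₃, movedBy_isolate_isolate h1 h12 h13 h23⟩,
    ⟨u₂, movedBy_isolate_isolate h132 h13 h12 h23.symm⟩,
    ⟨u₁, movedBy_isolate_isolate h231 h23 h12.symm h13.symm⟩,
    ⟨⟨_, hP.isolate {u₁, u₂, u₃}⟩,
      ⟨u₂, movedBy_isolate_isolate_triple h1 h12 h13 h23⟩, ⟨u₁, ?_⟩, ⟨u₁, ?_⟩,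
      fun h => isolate_triple_ne h1 h12 (congrArg Subtype.val h),
      fun ⟨x, hx⟩ => not_movedBy_isolate_triple h1 h12 h13 h23 hx⟩,
    ⟨_, hP.moveTo fun w hw => (samePart_singleton h2).1 hw ▸ e1⟩, ⟨u₁, movedBy_moveTo n1v⟩,
    Or.inl ⟨⟨v, movedBy_moveTo_isolate (fun h => n1v (h ▸ samePart_refl P u₁)) h2⟩,
      fun ⟨x, hx⟩ => not_movedBy_moveTo_isolate n1v s23 h23 h12 h13 hv2 hv3 hx,
      fun ⟨x, hx⟩ =>
        not_movedBy_moveTo_isolate n1v (samePart_comm.1 s23) h23.symm h13 h12 hv3 hv2 hx⟩⟩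
  · simpa only [insert_comm u₂ u₁] using movedBy_isolate_isolate_triple h213 h12.symm h23 h13
  · have := movedBy_isolate_isolate_triple h312 h13.symm h23.symm h12
    rwa [insert_comm u₃ u₁, pair_comm u₃ u₂] at this
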